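/- In a strong locally out-transitive oriented graph, any two distinct inclusion-wise maximal hubs are disjoint. -/

import Mathlib

/-- `A` is the arc relation of an oriented graph: no loops and no digons. -/
def IsOriented {V : Type*} (A : V → V → Prop) : Prop :=
  Irreflexive A ∧ ∀ x y, A x y → ¬ A y x

/-- `D` is strong: a directed path between each ordered pair of vertices. -/
def IsStrong {V : Type*} (A : V → V → Prop) : Prop :=
  ∀ x y : V, Relation.ReflTransGen A x y

/-- The set `S` induces a strong subdigraph (all paths staying inside `S`). -/
def StrongOn {V : Type*} (A : V → V → Prop) (S : Set V) : Prop :=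
  ∀ x ∈ S, ∀ y ∈ S, Relation.ReflTransGen (fun a b => a ∈ S ∧ b ∈ S ∧ A a b) x y

/-- The set `S` induces a tournament. -/
def TournamentOn {V : Type*} (A : V → V → Prop) (S : Set V) : Prop :=
  ∀ x ∈ S, ∀ y ∈ S, x ≠ y → A x y ∨ A y x

/-- The set `S` induces an acyclic digraph. -/
def AcyclicOn {V : Type*} (A : V → V → Prop) (S : Set V) : Prop :=
  ∀ x : V, ¬ Relation.TransGen (fun a b => a ∈ S ∧ b ∈ S ∧ A a b) x x

/-- The set `S` induces a semicomplete digraph. -/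
def SemicompleteOn {V : Type*} (A : V → V → Prop) (S : Set V) : Prop :=
  ∀ x ∈ S, ∀ y ∈ S, x ≠ y → A x y ∨ A y x

/-- `z` lies strictly inside the cyclic interval `]x,y[` for the cyclic order `σ`. -/
def CycBtw {V : Type*} [Fintype V] (σ : V ≃ Fin (Fintype.card V)) (x z y : V) : Prop :=
  0 < (σ z - σ x).val ∧ (σ z - σ x).val < (σ y - σ x).val

/-- In-round: a cyclic order such that for every arc `xy` and `z ∈ ]x,y[`, `zy` is an arc. -/
def InRound {V : Type*} [Fintype V] (A : V → V → Prop) : Prop :=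
  ∃ σ : V ≃ Fin (Fintype.card V), ∀ x y z : V, A x y → CycBtw σ x z y → A z y

/-- Out-round: a cyclic order such that for every arc `xy` and `z ∈ ]x,y[`, `xz` is an arc. -/
def OutRound {V : Type*} [Fintype V] (A : V → V → Prop) : Prop :=
  ∃ σ : V ≃ Fin (Fintype.card V), ∀ x y z : V, A x y → CycBtw σ x z y → A x z

/-- Every out-neighbourhood induces a transitive tournament. -/
def LocallyOutTransitive {V : Type*} (A : V → V → Prop) : Prop :=
  ∀ x : V, TournamentOn A {y | A x y} ∧ AcyclicOn A {y | A x y}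

/-- A hub: a nonempty set inducing a strong subdigraph, all of whose vertices are
in-neighbours of some vertex outside of it. -/
def Hub {V : Type*} (A : V → V → Prop) (H : Set V) : Prop :=
  H.Nonempty ∧ StrongOn A H ∧ ∃ x ∉ H, ∀ h ∈ H, A h x

/-- Locally semicomplete digraph: no loops, and every out- and in-neighbourhood
induces a semicomplete digraph (digons are allowed). -/
def LocallySemicomplete {V : Type*} (A : V → V → Prop) : Prop :=
  Irreflexive A ∧ (∀ x : V, SemicompleteOn A {y | A x y}) ∧
    ∀ x : V, SemicompleteOn A {y | A y x}

/-- The underlying undirected graph is connected. -/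
def ConnectedDigraph {V : Type*} (A : V → V → Prop) : Prop :=
  ∀ x y : V, Relation.ReflTransGen (fun a b => A a b ∨ A b a) x y

/-- A weak hub: a nonempty set inducing a strong subdigraph that is strictly
in-dominated or strictly out-dominated by some vertex outside of it. -/
def WeakHub {V : Type*} (A : V → V → Prop) (X : Set V) : Prop :=
  X.Nonempty ∧ StrongOn A X ∧
    ∃ x ∉ X, (∀ u ∈ X, A u x ∧ ¬ A x u) ∨ ∀ u ∈ X, A x u ∧ ¬ A u x

/-- A set `X` is mixed if some outside vertex has both an out-neighbour and an
in-neighbour in `X`. -/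
def MixedSet {V : Type*} (A : V → V → Prop) (X : Set V) : Prop :=
  ∃ x ∉ X, (∃ u ∈ X, A x u) ∧ ∃ v ∈ X, A v x

/-- `X` is an inclusion-wise maximal weak hub. -/
def MaxWeakHub {V : Type*} (A : V → V → Prop) (X : Set V) : Prop :=
  WeakHub A X ∧ ∀ Y : Set V, WeakHub A Y → X ⊆ Y → Y = X

/-! Since there are no digons, the vertex dominating one of the two hubs lies outside the
other. So let `H`, `K` be maximal hubs sharing a vertex, dominated by `x ∉ K` and `y`
respectively. If `x` also dominates `K`, then `H ∪ K` is a hub and maximality forces `H = K`.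
Otherwise a path inside `K` from the common vertex to a non-in-neighbour of `x` has an arc `cd`
with `c → x` and `d ↛ x`. In the transitive tournament on `N⁺(c)`, which contains `x`, `d` and
`y`, this gives `x → d → y`, hence `x → y`; so `K ∪ {x}` is a hub dominated by `y`, against
the maximality of `K`. -/

open Relation

theorem Relation.ReflTransGen.exists_rel_of_not {α : Type*} {r : α → α → Prop}
    {P : α → Prop} {a b : α} (h : ReflTransGen r a b) (ha : P a) (hb : ¬ P b) :
    ∃ c d, r c d ∧ P c ∧ ¬ P d := by
  induction h with
  | refl => exact absurd ha hb
  | @tail c d _ hcd ih =>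
    by_cases hc : P c
    · exact ⟨c, d, hcd, hc, hb⟩
    · exact ih hc

section

variable {V : Type*} {A : V → V → Prop}

namespace StrongOn

theorem reflTransGen_of_subset {S T : Set V} (hS : StrongOn A S) (hST : S ⊆ T) ⦃a b : V⦄
    (ha : a ∈ S) (hb : b ∈ S) : ReflTransGen (fun a b => a ∈ T ∧ b ∈ T ∧ A a b) a b :=
  ReflTransGen.mono (fun _ _ hab => ⟨hST hab.1, hST hab.2.1, hab.2.2⟩) _ _ (hS a ha b hb)

theorem union {H K : Set V} {v : V} (hH : StrongOn A H) (hK : StrongOn A K)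
    (hvH : v ∈ H) (hvK : v ∈ K) : StrongOn A (H ∪ K) := by
  have inH := hH.reflTransGen_of_subset (Set.subset_union_left (t := K))
  have inK := hK.reflTransGen_of_subset (Set.subset_union_right (s := H))
  rintro a (ha | ha) b (hb | hb)
  · exact inH ha hb
  · exact (inH ha hvH).trans (inK hvK hb)
  · exact (inK ha hvK).trans (inH hvH hb)
  · exact inK ha hb

theorem insert {K : Set V} {x c d : V} (hK : StrongOn A K) (hc : c ∈ K) (hcx : A c x)
    (hd : d ∈ K) (hxd : A x d) : StrongOn A (insert x K) := by
  have inK := hK.reflTransGen_of_subset (Set.subset_insert x K)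
  rintro a (rfl | ha) b (rfl | hb)
  · exact .refl
  · exact .head ⟨Set.mem_insert _ _, Set.mem_insert_of_mem _ hd, hxd⟩ (inK hd hb)
  · exact .tail (inK ha hc) ⟨Set.mem_insert_of_mem _ hc, Set.mem_insert _ _, hcx⟩
  · exact inK ha hb

end StrongOn

namespace LocallyOutTransitive

variable (hloc : LocallyOutTransitive A)
include hloc

theorem rel_of_not_rel {c x d : V} (hcx : A c x) (hcd : A c d) (hxd : x ≠ d)
    (hdx : ¬ A d x) : A x d :=
  ((hloc c).1 x hcx d hcd hxd).resolve_right hdx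

theorem rel_trans {c x d y : V} (hcx : A c x) (hcd : A c d) (hcy : A c y) (hxd : A x d)
    (hdy : A d y) (hxy : x ≠ y) : A x y :=
  ((hloc c).1 x hcx y hcy hxy).resolve_right fun hyx => (hloc c).2 x <|
    .head ⟨hcx, hcd, hxd⟩ (.head ⟨hcd, hcy, hdy⟩ (.single ⟨hcy, hcx, hyx⟩))

end LocallyOutTransitive

theorem eq_of_maximal_hub_of_dominates_union {H K : Set V} {v x : V}
    (hH : Maximal (Hub A) H) (hK : Maximal (Hub A) K) (hvH : v ∈ H) (hvK : v ∈ K)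
    (hxH : x ∉ H) (hxK : x ∉ K) (hdom : ∀ h ∈ H ∪ K, A h x) : H = K := by
  have hub : Hub A (H ∪ K) :=
    ⟨⟨v, .inl hvH⟩, hH.1.2.1.union hK.1.2.1 hvH hvK, x, fun h => h.elim hxH hxK, hdom⟩
  exact (hH.eq_of_subset hub Set.subset_union_left).trans
    (hK.eq_of_subset hub Set.subset_union_right).symm

theorem Hub.insert {K : Set V} {x y c d : V} (hK : StrongOn A K) (hyK : y ∉ K)
    (hKy : ∀ k ∈ K, A k y) (hxy : A x y) (hne : x ≠ y) (hc : c ∈ K) (hcx : A c x)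
    (hd : d ∈ K) (hxd : A x d) : Hub A (insert x K) := by
  refine ⟨Set.insert_nonempty x K, hK.insert hc hcx hd hxd, y, ?_, ?_⟩
  · rintro (h | h)
    exacts [hne h.symm, hyK h]
  · rintro k (rfl | hk)
    exacts [hxy, hKy k hk]

theorem inter_eq_empty_of_maximal_hubs (hloc : LocallyOutTransitive A) {H K : Set V} {x y : V}
    (hH : Maximal (Hub A) H) (hK : Maximal (Hub A) K) (hHK : H ≠ K)
    (hxH : x ∉ H) (hHx : ∀ h ∈ H, A h x) (hxK : x ∉ K)
    (hyK : y ∉ K) (hKy : ∀ k ∈ K, A k y) :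
    H ∩ K = ∅ := by
  by_contra hmeet
  obtain ⟨v, hvH, hvK⟩ := Set.nonempty_iff_ne_empty.mpr hmeet
  by_cases hKx : ∀ k ∈ K, A k x
  · exact hHK (eq_of_maximal_hub_of_dominates_union hH hK hvH hvK hxH hxK
      fun h hh => hh.elim (hHx h) (hKx h))
  push Not at hKx
  obtain ⟨u, huK, hux⟩ := hKx
  obtain ⟨c, d, ⟨hc, hd, hcd⟩, hcx, hdx⟩ :=
    (hK.1.2.1 v hvK u huK).exists_rel_of_not (P := (A · x)) (hHx v hvH) hux
  have hxd : A x d := hloc.rel_of_not_rel hcx hcd (fun h => hxK (h ▸ hd)) hdx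
  have hne : x ≠ y := fun h => hdx (h ▸ hKy d hd)
  have hxy : A x y := hloc.rel_trans hcx hcd (hKy c hc) hxd (hKy d hd) hne
  have hub := Hub.insert hK.1.2.1 hyK hKy hxy hne hc hcx hd hxd
  exact hxK (hK.eq_of_subset hub (Set.subset_insert x K) ▸ Set.mem_insert x K)

end

theorem stmt5_general {V : Type*} (A : V → V → Prop)
    (hor : IsOriented A) (hloc : LocallyOutTransitive A)
    (H1 H2 : Set V)
    (h1 : Hub A H1) (h1max : ∀ H' : Set V, Hub A H' → H1 ⊆ H' → H' = H1)
    (h2 : Hub A H2) (h2max : ∀ H' : Set V, Hub A H' → H2 ⊆ H' → H' = H2)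
    (hne : H1 ≠ H2) :
    H1 ∩ H2 = ∅ := by
  have hH1 : Maximal (Hub A) H1 := ⟨h1, fun H' hH' hsub => (h1max H' hH' hsub).le⟩
  have hH2 : Maximal (Hub A) H2 := ⟨h2, fun H' hH' hsub => (h2max H' hH' hsub).le⟩
  obtain ⟨-, -, x1, hx1, hd1⟩ := h1
  obtain ⟨-, -, x2, hx2, hd2⟩ := h2
  by_cases hx1H2 : x1 ∈ H2
  · have hx2H1 : x2 ∉ H1 := fun h => hor.2 x1 x2 (hd2 x1 hx1H2) (hd1 x2 h)
    rw [Set.inter_comm]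
    exact inter_eq_empty_of_maximal_hubs hloc hH2 hH1 hne.symm hx2 hd2 hx2H1 hx1 hd1
  · exact inter_eq_empty_of_maximal_hubs hloc hH1 hH2 hne hx1 hd1 hx1H2 hx2 hd2

theorem stmt5 {V : Type*} [Fintype V] (A : V → V → Prop)
    (hor : IsOriented A) (hstrong : IsStrong A) (hloc : LocallyOutTransitive A)
    (H1 H2 : Set V)
    (h1 : Hub A H1) (h1max : ∀ H' : Set V, Hub A H' → H1 ⊆ H' → H' = H1)
    (h2 : Hub A H2) (h2max : ∀ H' : Set V, Hub A H' → H2 ⊆ H' → H' = H2)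
    (hne : H1 ≠ H2) :
    H1 ∩ H2 = ∅ :=
  stmt5_general A hor hloc H1 H2 h1 h1max h2 h2max hne
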